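/- arXiv:2405.05995 — 4 statements merged into one kernel-verified Lean document; each statement's English description precedes it below -/
import Mathlib

section
/- The polynomial f(x) = ∏_{k=0}^{15} (x² − √2·cos(2πk/16)·x + 1) is a monic polynomial with rational coefficients whose coefficient of x²⁴ equals 901/4; in particular f does not have integer coefficients. -/
/-!
Since `cos (θ + π) = -cos θ`, the factors for `k` and `k + n` in a product over `k < 2n` of
expressions in `cos (2πk / 2n)` pair off, and `cos² θ = (1 + cos 2θ) / 2` turns each pair into
an expression in `cos (2πk / n)`. Three such halvings, `16 → 8 → 4 → 2`, leave two factors,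
`f(x) = (P² - x⁴/2)² ((P² - x⁴/2)² - x⁸/4)` with `P = x⁴ + x² + 1`, a polynomial with rational
coefficients whose coefficient of `x²⁴` is `901/4`.
-/

open Polynomial Real Finset

theorem prod_range_two_mul_comp_cos {M : Type*} [CommMonoid M] (n : ℕ) (F G : ℝ → M)
    (hFG : ∀ θ, F (cos θ) * F (-cos θ) = G (cos (2 * θ))) :
    ∏ k ∈ range (2 * n), F (cos (2 * π * k / (2 * n))) =
      ∏ k ∈ range n, G (cos (2 * π * k / n)) := by
  rw [two_mul, prod_range_add, ← prod_mul_distrib]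
  refine prod_congr rfl fun k hk => ?_
  have hn : (n : ℝ) ≠ 0 := Nat.cast_ne_zero.2 (Nat.ne_zero_of_lt (mem_range.1 hk))
  have hshift : 2 * π * ↑(n + k) / (2 * n) = 2 * π * k / (2 * n) + π := by
    push_cast; field_simp; ring
  have hdouble : 2 * (2 * π * k / (2 * n)) = 2 * π * k / n := by
    field_simp
  rw [hshift, cos_add_pi, hFG, hdouble]

theorem prod_range_sixteen_hadamard_factor (x : ℝ) :
    ∏ k ∈ range 16, (x ^ 2 - √2 * cos (2 * π * k / 16) * x + 1) =
      ((x ^ 4 + x ^ 2 + 1) ^ 2 - x ^ 4 / 2) ^ 2 *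
        (((x ^ 4 + x ^ 2 + 1) ^ 2 - x ^ 4 / 2) ^ 2 - x ^ 8 / 4) := by
  have h₁₆ := prod_range_two_mul_comp_cos 8 (fun c => x ^ 2 - √2 * c * x + 1)
    (fun c => x ^ 4 + (1 - c) * x ^ 2 + 1) fun θ => by
      simp only [cos_two_mul]
      linear_combination (-x ^ 2 * cos θ ^ 2) * sq_sqrt (zero_le_two : (0 : ℝ) ≤ 2)
  have h₈ := prod_range_two_mul_comp_cos 4 (fun c => x ^ 4 + (1 - c) * x ^ 2 + 1)
    (fun c => (x ^ 4 + x ^ 2 + 1) ^ 2 - (1 + c) / 2 * x ^ 4) fun θ => by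
      simp only [cos_two_mul]; ring
  have h₄ := prod_range_two_mul_comp_cos 2
    (fun c => (x ^ 4 + x ^ 2 + 1) ^ 2 - (1 + c) / 2 * x ^ 4)
    (fun c => ((x ^ 4 + x ^ 2 + 1) ^ 2 - x ^ 4 / 2) ^ 2 - (1 + c) / 8 * x ^ 8) fun θ => by
      simp only [cos_two_mul]; ring
  norm_num at h₁₆ h₈ h₄
  rw [h₁₆, h₈, h₄]
  norm_num [prod_range_succ]
  ring

noncomputable def hadamardCharpolyC16 : ℚ[X] :=
  1 + C 8 * X ^ 2 + C 34 * X ^ 4 + C 100 * X ^ 6 + C (901 / 4) * X ^ 8 + C 409 * X ^ 10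
    + C (2465 / 4) * X ^ 12 + C (1567 / 2) * X ^ 14 + C 848 * X ^ 16 + C (1567 / 2) * X ^ 18
    + C (2465 / 4) * X ^ 20 + C 409 * X ^ 22 + C (901 / 4) * X ^ 24 + C 100 * X ^ 26
    + C 34 * X ^ 28 + C 8 * X ^ 30 + X ^ 32

theorem hadamardCharpolyC16_monic : hadamardCharpolyC16.Monic := by
  unfold hadamardCharpolyC16
  monicity!

theorem hadamardCharpolyC16_coeff_24 : hadamardCharpolyC16.coeff 24 = 901 / 4 := by
  simp [hadamardCharpolyC16, coeff_X_pow, coeff_one]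

theorem eval_map_hadamardCharpolyC16 (x : ℝ) :
    (hadamardCharpolyC16.map (algebraMap ℚ ℝ)).eval x =
      ((x ^ 4 + x ^ 2 + 1) ^ 2 - x ^ 4 / 2) ^ 2 *
        (((x ^ 4 + x ^ 2 + 1) ^ 2 - x ^ 4 / 2) ^ 2 - x ^ 8 / 4) := by
  simp [hadamardCharpolyC16]
  ring

theorem hadamard_charpoly_C16_not_integral :
    let f : Polynomial ℝ := ∏ k ∈ Finset.range 16,
      (X ^ 2 - C (Real.sqrt 2 * Real.cos (2 * π * k / 16)) * X + 1)
    f.Monic ∧ (∀ i : ℕ, ∃ q : ℚ, f.coeff i = (q : ℝ)) ∧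
      f.coeff 24 = 901 / 4 ∧ ¬ (∀ i : ℕ, ∃ m : ℤ, f.coeff i = (m : ℝ)) := by
  intro f
  have hf : f = hadamardCharpolyC16.map (algebraMap ℚ ℝ) := by
    refine Polynomial.funext fun x => ?_
    simp only [f, eval_prod, eval_add, eval_sub, eval_mul, eval_pow, eval_X, eval_C, eval_one]
    rw [prod_range_sixteen_hadamard_factor, eval_map_hadamardCharpolyC16]
  have h24 : f.coeff 24 = 901 / 4 := by
    rw [hf, coeff_map, hadamardCharpolyC16_coeff_24]
    norm_num
  refine ⟨hf ▸ hadamardCharpolyC16_monic.map _,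
    fun i => ⟨hadamardCharpolyC16.coeff i, by rw [hf, coeff_map, eq_ratCast]⟩, h24, ?_⟩
  intro hint
  obtain ⟨m, hm⟩ := hint 24
  have : (901 : ℤ) = 4 * m := by
    rw [h24] at hm
    exact_mod_cast (by linarith : (901 : ℝ) = 4 * m)
  omega
end

section
/- If N ≥ 2 is an integer not divisible by 3, then the monic polynomial ∏_{k=0}^{N−1} (x³ + (1/3)(1 + 2cos(2πk/N))x² − (1/3)(1 + 2cos(2πk/N))x − 1) has rational coefficients but not integer coefficients: its coefficient of x^{3N−1} is N/3. -/
open Polynomial Real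


noncomputable def fac {F : Type*} [Field F] (z : F) : F[X] :=
  X ^ 3 + C ((1 + z + z⁻¹) / 3) * X ^ 2 - C ((1 + z + z⁻¹) / 3) * X - 1

lemma fac_map {F E : Type*} [Field F] [Field E] (φ : F →+* E) (z : F) :
    (fac z).map φ = fac (φ z) := by
  simp [fac, Polynomial.map_add, Polynomial.map_sub, Polynomial.map_mul, Polynomial.map_pow,
    Polynomial.map_one, map_C, map_X, map_div₀, map_inv₀, map_ofNat]

lemma prod_fac_reindex {M : Type*} [CommMonoid M] {K : Type*} [Field K] {N : ℕ} (hN : 0 < N)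
    {ζ : K} (hζ : IsPrimitiveRoot ζ N) {m m' : ℕ} (hmm : m * m' ≡ 1 [MOD N])
    (G : K → M) :
    ∏ k ∈ Finset.range N, G ((ζ ^ m) ^ k) = ∏ k ∈ Finset.range N, G (ζ ^ k) := by
  have hred : ∀ a : ℕ, ζ ^ a = ζ ^ (a % N) := by
    intro a
    conv_lhs => rw [← Nat.mod_add_div a N]
    rw [pow_add, pow_mul, hζ.pow_eq_one, one_pow, mul_one]
  have hpow : ∀ a b : ℕ, a ≡ b [MOD N] → ζ ^ a = ζ ^ b := by
    intro a b h
    rw [hred a, hred b]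
    exact congrArg (ζ ^ ·) h
  refine Finset.prod_nbij' (fun k => m * k % N) (fun k => m' * k % N)
    (fun a _ => Finset.mem_range.mpr (Nat.mod_lt _ hN))
    (fun a _ => Finset.mem_range.mpr (Nat.mod_lt _ hN)) ?_ ?_ ?_
  · intro a ha
    show m' * (m * a % N) % N = a
    have h1 : (m' * (m * a % N)) % N = (m' * (m * a)) % N :=
      Nat.ModEq.mul_left m' (Nat.mod_modEq (m * a) N)
    have h2 : (m' * (m * a)) % N = (1 * a) % N := by
      have hr : m' * (m * a) = m * m' * a := by ring
      rw [hr]; exact hmm.mul_right a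
    rw [h1, h2, one_mul, Nat.mod_eq_of_lt (Finset.mem_range.mp ha)]
  · intro a ha
    show m * (m' * a % N) % N = a
    have h1 : (m * (m' * a % N)) % N = (m * (m' * a)) % N :=
      Nat.ModEq.mul_left m (Nat.mod_modEq (m' * a) N)
    have h2 : (m * (m' * a)) % N = (1 * a) % N := by
      have hr : m * (m' * a) = m * m' * a := by ring
      rw [hr]; exact hmm.mul_right a
    rw [h1, h2, one_mul, Nat.mod_eq_of_lt (Finset.mem_range.mp ha)]
  · intro a _
    congr 1
    rw [← pow_mul]
    exact hpow _ _ (Nat.mod_modEq (m * a) N).symm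


lemma mu_pow (N : ℕ) (k : ℕ) :
    Complex.exp (2 * π * Complex.I / N) ^ k = Complex.exp ((2 * π * k / N : ℝ) * Complex.I) := by
  rw [← Complex.exp_nat_mul]
  congr 1
  push_cast
  ring

lemma scalar_id (N : ℕ) (k : ℕ) :
    ((1 / 3 * (1 + 2 * Real.cos (2 * π * k / N)) : ℝ) : ℂ) =
      (1 + Complex.exp (2 * π * Complex.I / N) ^ k
        + (Complex.exp (2 * π * Complex.I / N) ^ k)⁻¹) / 3 := by
  rw [mu_pow N k, ← Complex.exp_neg]
  have h2 : Complex.exp ((2 * π * k / N : ℝ) * Complex.I)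
      + Complex.exp (-((2 * π * k / N : ℝ) * Complex.I)) = 2 * Complex.cos (2 * π * k / N : ℝ) := by
    rw [Complex.cos]
    ring
  push_cast at h2 ⊢
  linear_combination (-1/3 : ℂ) * h2

lemma sum_cos_eq_zero (N : ℕ) (hN : 2 ≤ N) :
    ∑ k ∈ Finset.range N, Real.cos (2 * π * k / N) = 0 := by
  have hμ : IsPrimitiveRoot (Complex.exp (2 * π * Complex.I / N)) N :=
    Complex.isPrimitiveRoot_exp N (by omega)
  set μ := Complex.exp (2 * π * Complex.I / N) with hμdef
  have hne : μ ≠ 1 := by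
    intro h
    have := hμ.pow_eq_one_iff_dvd 1
    simp [h] at this
    omega
  have hsum : ∑ k ∈ Finset.range N, μ ^ k = 0 := by
    rw [geom_sum_eq hne, hμ.pow_eq_one]
    simp
  have hre : ∑ k ∈ Finset.range N, Real.cos (2 * π * k / N)
      = ∑ i ∈ Finset.range N, (μ ^ i).re := by
    apply Finset.sum_congr rfl
    intro k _
    rw [hμdef, mu_pow N k, Complex.exp_ofReal_mul_I_re]
  rw [hre, ← Complex.re_sum, hsum, Complex.zero_re]


lemma rfac_monic (a : ℝ) : (X ^ 3 + C a * X ^ 2 - C a * X - 1 : ℝ[X]).Monic := by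
  monicity!

lemma rfac_natDegree (a : ℝ) : (X ^ 3 + C a * X ^ 2 - C a * X - 1 : ℝ[X]).natDegree = 3 := by
  compute_degree!

lemma rfac_nextCoeff (a : ℝ) : (X ^ 3 + C a * X ^ 2 - C a * X - 1 : ℝ[X]).nextCoeff = a := by
  rw [Polynomial.nextCoeff_of_natDegree_pos (by rw [rfac_natDegree]; norm_num), rfac_natDegree]
  norm_num [coeff_one, coeff_X]

lemma rfac_map (N k : ℕ) :
    (X ^ 3 + C (1 / 3 * (1 + 2 * Real.cos (2 * π * k / N))) * X ^ 2
      - C (1 / 3 * (1 + 2 * Real.cos (2 * π * k / N))) * X - 1 : ℝ[X]).map (algebraMap ℝ ℂ)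
      = fac (Complex.exp (2 * π * Complex.I / N) ^ k) := by
  simp only [fac, Polynomial.map_sub, Polynomial.map_add, Polynomial.map_mul, Polynomial.map_pow,
    Polynomial.map_one, map_C, map_X]
  rw [show (algebraMap ℝ ℂ) (1 / 3 * (1 + 2 * Real.cos (2 * π * k / N)))
      = ((1 / 3 * (1 + 2 * Real.cos (2 * π * k / N)) : ℝ) : ℂ) from rfl, scalar_id N k]

lemma coeff_rat (N : ℕ) (hN : 2 ≤ N) (i : ℕ) :
    ∃ q : ℚ, (∏ k ∈ Finset.range N,
      (X ^ 3 + C ((1 / 3) * (1 + 2 * Real.cos (2 * π * k / N))) * X ^ 2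
        - C ((1 / 3) * (1 + 2 * Real.cos (2 * π * k / N))) * X - 1) : ℝ[X]).coeff i
      = (q : ℝ) := by
  haveI : NeZero N := ⟨by omega⟩
  set μ : ℂ := Complex.exp (2 * π * Complex.I / N) with hμdef
  have hμ : IsPrimitiveRoot μ N := Complex.isPrimitiveRoot_exp N (by omega)
  set n : ℕ+ := ⟨N, by omega⟩ with hndef
  have hnN : (n : ℕ) = N := rfl
  set K := CyclotomicField n ℚ with hKdef
  haveI : IsCyclotomicExtension {(n : ℕ)} ℚ K := by
    convert CyclotomicField.instIsCyclotomicExtensionSingletonNatSetOfCharZero (n : ℕ) ℚ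
    · rfl
    · exact Subsingleton.elim _ _
  set ζ : K := IsCyclotomicExtension.zeta n ℚ K with hζdef
  have hζ : IsPrimitiveRoot ζ N := IsCyclotomicExtension.zeta_spec n ℚ K
  have hirr : Irreducible (Polynomial.cyclotomic N ℚ) :=
    Polynomial.cyclotomic.irreducible_rat (by omega)
  have hirr' : Irreducible (Polynomial.cyclotomic (n : ℕ) ℚ) := by rwa [hnN]
  -- the embedding
  set hζ' := IsCyclotomicExtension.zeta_spec n ℚ K with hζ'def
  set φ : K →ₐ[ℚ] ℂ := (hζ'.embeddingsEquivPrimitiveRoots ℂ hirr').symm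
    ⟨μ, (mem_primitiveRoots (by omega : 0 < N)).mpr hμ⟩ with hφdef
  have hφζ : φ ζ = μ := by
    have h1 := hζ'.embeddingsEquivPrimitiveRoots_apply_coe ℂ hirr' φ
    rw [hφdef, Equiv.apply_symm_apply] at h1
    exact h1.symm
  -- the polynomial over K
  set g : K[X] := ∏ k ∈ Finset.range N, fac (ζ ^ k) with hgdef
  -- Galois-fixed coefficients
  haveI := IsCyclotomicExtension.finiteDimensional {(n : ℕ)} ℚ K
  haveI := IsCyclotomicExtension.isGalois {(n : ℕ)} ℚ K
  have hfix : ∀ σ : K ≃ₐ[ℚ] K, σ (g.coeff i) = g.coeff i := by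
    intro σ
    have hσ : IsPrimitiveRoot (σ ζ) N := hζ.map_of_injective σ.injective
    obtain ⟨m, hmlt, hmζ⟩ := hζ.eq_pow_of_pow_eq_one hσ.pow_eq_one
    have hσ' : IsPrimitiveRoot (σ.symm ζ) N := hζ.map_of_injective σ.symm.injective
    obtain ⟨m', hm'lt, hm'ζ⟩ := hζ.eq_pow_of_pow_eq_one hσ'.pow_eq_one
    have hmm : m * m' ≡ 1 [MOD N] := by
      have h1 : ζ ^ (m * m') = ζ ^ 1 := by
        have h0 : σ (ζ ^ m') = ζ := by rw [hm'ζ, AlgEquiv.apply_symm_apply]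
        rw [map_pow, ← hmζ, ← pow_mul] at h0
        rw [h0, pow_one]
      have hmodlt : m * m' % N < N := Nat.mod_lt _ (by omega)
      have h2 : ζ ^ (m * m' % N) = ζ ^ (1 % N) := by
        have hred : ∀ a : ℕ, ζ ^ a = ζ ^ (a % N) := by
          intro a
          conv_lhs => rw [← Nat.mod_add_div a N]
          rw [pow_add, pow_mul, hζ.pow_eq_one, one_pow, mul_one]
        rw [← hred, ← hred, h1]
      exact (hζ.pow_inj hmodlt (Nat.mod_lt _ (by omega)) h2 : _)
    have hmap : g.map (σ : K →+* K) = g := by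
      rw [hgdef, Polynomial.map_prod]
      calc ∏ k ∈ Finset.range N, (fac (ζ ^ k)).map (σ : K →+* K)
          = ∏ k ∈ Finset.range N, fac ((ζ ^ m) ^ k) :=
            Finset.prod_congr rfl (fun k _ => by rw [fac_map, map_pow, show ((σ : K →+* K) ζ) = σ ζ from rfl, ← hmζ])
        _ = ∏ k ∈ Finset.range N, fac (ζ ^ k) :=
            prod_fac_reindex (by omega) hζ hmm fac
    calc σ (g.coeff i) = (g.map (σ : K →+* K)).coeff i := by rw [Polynomial.coeff_map]; rfl
      _ = g.coeff i := by rw [hmap]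
  have hbot : g.coeff i ∈ (⊥ : IntermediateField ℚ K) := by
    have h1 : IntermediateField.fixedField (⊤ : Subgroup (K ≃ₐ[ℚ] K)) = ⊥ := by
      rw [← IntermediateField.fixingSubgroup_bot (F := ℚ) (E := K)]
      exact IsGalois.fixedField_fixingSubgroup ⊥
    rw [← h1]
    exact fun σ => hfix σ
  obtain ⟨q, hq⟩ := IntermediateField.mem_bot.mp hbot
  refine ⟨q, ?_⟩
  have hmapφ : g.map (φ : K →+* ℂ) = ∏ k ∈ Finset.range N, fac (μ ^ k) := by
    rw [hgdef, Polynomial.map_prod]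
    exact Finset.prod_congr rfl fun k _ => by
      rw [fac_map, map_pow, show ((φ : K →+* ℂ) ζ) = φ ζ from rfl, hφζ]
  have hmapR : (∏ k ∈ Finset.range N,
      (X ^ 3 + C ((1 / 3) * (1 + 2 * Real.cos (2 * π * k / N))) * X ^ 2
        - C ((1 / 3) * (1 + 2 * Real.cos (2 * π * k / N))) * X - 1) : ℝ[X]).map (algebraMap ℝ ℂ)
      = ∏ k ∈ Finset.range N, fac (μ ^ k) := by
    rw [Polynomial.map_prod]
    exact Finset.prod_congr rfl fun k _ => rfac_map N k
  have h2 : (((∏ k ∈ Finset.range N,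
      (X ^ 3 + C ((1 / 3) * (1 + 2 * Real.cos (2 * π * k / N))) * X ^ 2
        - C ((1 / 3) * (1 + 2 * Real.cos (2 * π * k / N))) * X - 1) : ℝ[X]).coeff i : ℝ) : ℂ)
      = (q : ℂ) := by
    rw [show (((∏ k ∈ Finset.range N,
      (X ^ 3 + C ((1 / 3) * (1 + 2 * Real.cos (2 * π * k / N))) * X ^ 2
        - C ((1 / 3) * (1 + 2 * Real.cos (2 * π * k / N))) * X - 1) : ℝ[X]).coeff i : ℝ) : ℂ)
      = algebraMap ℝ ℂ ((∏ k ∈ Finset.range N,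
      (X ^ 3 + C ((1 / 3) * (1 + 2 * Real.cos (2 * π * k / N))) * X ^ 2
        - C ((1 / 3) * (1 + 2 * Real.cos (2 * π * k / N))) * X - 1) : ℝ[X]).coeff i) from
        congrFun Complex.coe_algebraMap.symm _]
    rw [← Polynomial.coeff_map, hmapR, ← hmapφ, Polynomial.coeff_map,
      show ((φ : K →+* ℂ) (g.coeff i)) = φ (g.coeff i) from rfl, ← hq, AlgHom.commutes]
    simp
  exact_mod_cast h2

theorem grover_charpoly_not_integral (N : ℕ) (hN : 2 ≤ N) (h3 : ¬ (3 ∣ N)) :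
    let f : Polynomial ℝ := ∏ k ∈ Finset.range N,
      (X ^ 3 + C ((1 / 3) * (1 + 2 * Real.cos (2 * π * k / N))) * X ^ 2
        - C ((1 / 3) * (1 + 2 * Real.cos (2 * π * k / N))) * X - 1)
    f.Monic ∧ (∀ i : ℕ, ∃ q : ℚ, f.coeff i = (q : ℝ)) ∧
      f.coeff (3 * N - 1) = N / 3 ∧
      ¬ (∀ i : ℕ, ∃ m : ℤ, f.coeff i = (m : ℝ)) := by
  intro f
  have hf : f = ∏ k ∈ Finset.range N,
      (X ^ 3 + C ((1 / 3) * (1 + 2 * Real.cos (2 * π * k / N))) * X ^ 2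
        - C ((1 / 3) * (1 + 2 * Real.cos (2 * π * k / N))) * X - 1) := rfl
  have hmonic : f.Monic := by
    rw [hf]; exact monic_prod_of_monic _ _ fun k _ => rfac_monic _
  have hdeg : f.natDegree = 3 * N := by
    rw [hf, Polynomial.natDegree_prod _ _ (fun k _ => (rfac_monic _).ne_zero),
      Finset.sum_congr rfl (fun k _ => rfac_natDegree _), Finset.sum_const, Finset.card_range,
      smul_eq_mul, mul_comm]
  have hcoeff : f.coeff (3 * N - 1) = N / 3 := by
    have h1 : f.nextCoeff = ∑ k ∈ Finset.range N, (1 / 3) * (1 + 2 * Real.cos (2 * π * k / N)) := by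
      rw [hf, Monic.nextCoeff_prod _ _ (fun k _ => rfac_monic _)]
      exact Finset.sum_congr rfl fun k _ => rfac_nextCoeff _
    have h2 : f.nextCoeff = f.coeff (3 * N - 1) := by
      rw [Polynomial.nextCoeff_of_natDegree_pos (by rw [hdeg]; omega), hdeg]
    have h4 : ∑ k ∈ Finset.range N, (1 / 3 : ℝ) * (1 + 2 * Real.cos (2 * π * k / N))
        = ∑ k ∈ Finset.range N, (1 / 3 : ℝ)
          + ∑ k ∈ Finset.range N, (2 / 3) * Real.cos (2 * π * k / N) := by
      rw [← Finset.sum_add_distrib]; exact Finset.sum_congr rfl fun k _ => by ring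
    rw [← h2, h1, h4, Finset.sum_const, Finset.card_range, ← Finset.mul_sum,
      sum_cos_eq_zero N hN]
    simp [nsmul_eq_mul]
    ring
  refine ⟨hmonic, fun i => by rw [hf]; exact coeff_rat N hN i, hcoeff, ?_⟩
  intro hall
  obtain ⟨m, hm⟩ := hall (3 * N - 1)
  rw [hcoeff] at hm
  have hr : (N : ℝ) = ((3 * m : ℤ) : ℝ) := by push_cast; linarith
  have hz : (N : ℤ) = 3 * m := by exact_mod_cast hr
  apply h3
  have hd : (3 : ℤ) ∣ (N : ℤ) := ⟨m, hz⟩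
  exact_mod_cast hd
end

section
/- The polynomial x⁶ + (2/3)x⁵ − x⁴ − (4/3)x³ − x² + (2/3)x + 1 has a complex root that is not a root of unity; consequently, no power of the companion/evolution matrix with this characteristic polynomial equals the identity. -/
open Polynomial

set_option maxRecDepth 8000 in
set_option maxHeartbeats 1000000 in
theorem grover_C2_root_not_root_of_unity :
    let p : Polynomial ℂ := X ^ 6 + C (2 / 3) * X ^ 5 - X ^ 4 - C (4 / 3) * X ^ 3
      - X ^ 2 + C (2 / 3) * X + 1
    (∃ z : ℂ, p.IsRoot z ∧ ¬ ∃ n : ℕ, 0 < n ∧ z ^ n = 1) ∧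
    ∀ (U : Matrix (Fin 6) (Fin 6) ℂ), U.charpoly = p →
      ∀ n : ℕ, 0 < n → U ^ n ≠ 1 := by
  intro p
  have hm : p.Monic := by
    unfold p
    monicity!
  have hdeg : p.natDegree = 6 := by
    unfold p
    compute_degree!
  have hnc : p.nextCoeff = 2 / 3 := by
    rw [nextCoeff_of_natDegree_pos (by rw [hdeg]; norm_num), hdeg]
    unfold p
    simp [coeff_one]
  have key : ∃ z : ℂ, p.IsRoot z ∧ ¬ ∃ n : ℕ, 0 < n ∧ z ^ n = 1 := by
    by_contra h
    push_neg at h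
    have hint : ∀ z ∈ p.roots, z ∈ integralClosure ℤ ℂ := by
      intro z hz
      obtain ⟨n, hn, hzn⟩ := h z (isRoot_of_mem_roots hz)
      exact ⟨X ^ n - 1, monic_X_pow_sub_C (1 : ℤ) hn.ne',
        by simp [hzn]⟩
    have hsum : p.roots.sum ∈ integralClosure ℤ ℂ :=
      multiset_sum_mem _ hint
    have hs := (IsAlgClosed.splits p).nextCoeff_eq_neg_sum_roots_of_monic hm
    rw [hnc] at hs
    have h23 : IsIntegral ℤ ((2 / 3 : ℚ) : ℂ) := by
      have : ((2 / 3 : ℚ) : ℂ) = -p.roots.sum := by push_cast; rw [← hs]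
      rw [this]
      exact (hsum : IsIntegral ℤ p.roots.sum).neg
    rw [show ((2 / 3 : ℚ) : ℂ) = algebraMap ℚ ℂ (2 / 3) from rfl,
      isIntegral_algebraMap_iff (algebraMap ℚ ℂ).injective] at h23
    obtain ⟨y, hy⟩ := IsIntegrallyClosed.isIntegral_iff.mp h23
    have : (3 : ℚ) * (y : ℚ) = 2 := by
      rw [show ((y : ℚ)) = 2 / 3 from hy]; norm_num
    have : (3 : ℤ) * y = 2 := by exact_mod_cast this
    omega
  refine ⟨key, ?_⟩
  intro U hU n hn hUn
  obtain ⟨z, hz, hznot⟩ := key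
  apply hznot
  refine ⟨n, hn, ?_⟩
  set A : Matrix (Fin 6) (Fin 6) ℂ := Matrix.scalar (Fin 6) z with hA
  have hdet : (A - U).det = 0 := by
    have h1 : Polynomial.eval z (Matrix.charmatrix U).det = 0 := by
      have h0 : Polynomial.eval z U.charpoly = 0 := by rw [hU]; exact hz
      exact h0
    rw [eval_det, Matrix.matPolyEquiv_charmatrix] at h1
    rw [eval_sub, eval_X, eval_C] at h1
    exact h1
  have hcomm : Commute A U := Matrix.scalar_commute z (fun r => Commute.all z r) U
  have hgeom := hcomm.geom_sum₂_mul n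
  have hdet2 : (A ^ n - U ^ n).det = 0 := by
    rw [← hgeom, Matrix.det_mul, hdet, mul_zero]
  rw [hUn, hA, ← map_pow, show ((1 : Matrix (Fin 6) (Fin 6) ℂ)) = Matrix.scalar (Fin 6) 1 from
    (map_one _).symm, ← map_sub] at hdet2
  rw [Matrix.scalar_apply, Matrix.det_diagonal] at hdet2
  simp only [Finset.prod_const] at hdet2
  have : z ^ n - 1 = 0 := by
    have := pow_eq_zero_iff (n := Finset.card (Finset.univ : Finset (Fin 6))) (by simp) |>.mp hdet2
    exact this
  exact sub_eq_zero.mp this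
end

section
/- The function f(u) = (u−1)/((u²−1)²(u³−1)²) satisfies f(1/u) = −u⁹·f(u), i.e., it is an absolute automorphic form of weight −9 with C = −1. -/
theorem grover_M_C3_zeta_absolute_automorphic (u : ℝ)
    (hu : u ≠ 0) (h2 : u ^ 2 - 1 ≠ 0) (h3 : u ^ 3 - 1 ≠ 0) :
    (1 / u - 1) / (((1 / u) ^ 2 - 1) ^ 2 * ((1 / u) ^ 3 - 1) ^ 2) =
      -u ^ 9 * ((u - 1) / ((u ^ 2 - 1) ^ 2 * (u ^ 3 - 1) ^ 2)) := by
  have e1 : 1 / u - 1 = -(u - 1) / u := by field_simp; ring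
  have e2 : (1 / u) ^ 2 - 1 = -(u ^ 2 - 1) / u ^ 2 := by field_simp; ring
  have e3 : (1 / u) ^ 3 - 1 = -(u ^ 3 - 1) / u ^ 3 := by field_simp; ring
  have hL : u * ((-(u ^ 2 - 1)) ^ 2 * (-(u ^ 3 - 1)) ^ 2) ≠ 0 :=
    mul_ne_zero hu (mul_ne_zero (pow_ne_zero _ (neg_ne_zero.mpr h2))
      (pow_ne_zero _ (neg_ne_zero.mpr h3)))
  have hR : (u ^ 2 - 1) ^ 2 * (u ^ 3 - 1) ^ 2 ≠ 0 :=
    mul_ne_zero (pow_ne_zero _ h2) (pow_ne_zero _ h3)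
  rw [e1, e2, e3, div_pow, div_pow, div_mul_div_comm, div_div_div_eq,
    mul_div_assoc', div_eq_div_iff hL hR]
  ring
end
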